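/- A set E ⊆ ℝ^d is porous if and only if there exists a constant C such that for every cube R ⊆ ℝ^d, ∑_{Q ∈ 𝒟(R,E)} |Q| ≤ C|R|, where 𝒟(R,E) is the family of dyadic subcubes of R intersecting E (Borichev–Nicolau–Thomas characterization in ℝ^d). -/

import Mathlib

open MeasureTheory Metric

/-- A half-open axis-parallel cube in `ℝ^d`: `[a₁, a₁+l) × ⋯ × [a_d, a_d+l)`. -/
structure Cube (d : ℕ) where
  a : Fin d → ℝ
  l : ℝ
  l_pos : 0 < l

/-- The underlying point set of a cube. -/
def Cube.set {d : ℕ} (Q : Cube d) : Set (EuclideanSpace ℝ (Fin d)) :=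
  {x | ∀ i, Q.a i ≤ x i ∧ x i < Q.a i + Q.l}

/-- `Q` is a dyadic subcube of `R`: a member of `𝒟_j(R)` for some `j ≥ 0`. -/
def IsDyadicSubcube {d : ℕ} (R Q : Cube d) : Prop :=
  ∃ j : ℕ, ∃ k : Fin d → ℕ, (∀ i, k i < 2 ^ j) ∧ Q.l = R.l / 2 ^ j ∧
    ∀ i, Q.a i = R.a i + (k i : ℝ) * (R.l / 2 ^ j)

/-- `Q' ∈ ℱ(R,E)`: a maximal dyadic subcube of `R` avoiding `E`, i.e.
`Q' ∩ E = ∅` and its dyadic parent `πQ'` meets `E`. -/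
def IsMaxEmpty {d : ℕ} (R : Cube d) (E : Set (EuclideanSpace ℝ (Fin d))) (Q' : Cube d) : Prop :=
  IsDyadicSubcube R Q' ∧ Q'.set ∩ E = ∅ ∧
    ∃ P : Cube d, IsDyadicSubcube R P ∧ P.l = 2 * Q'.l ∧ Q'.set ⊆ P.set ∧ (P.set ∩ E).Nonempty

/-- `M = M(R)`: a largest dyadic subcube of `R` containing no point of `E`. -/
def IsLargestEmptyDyadic {d : ℕ} (R : Cube d) (E : Set (EuclideanSpace ℝ (Fin d)))
    (M : Cube d) : Prop :=
  IsDyadicSubcube R M ∧ M.set ∩ E = ∅ ∧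
    ∀ Q : Cube d, IsDyadicSubcube R Q → Q.set ∩ E = ∅ → Q.l ≤ M.l

/-- Weak porosity of `E ⊆ ℝ^d`. -/
def WeaklyPorous {d : ℕ} (E : Set (EuclideanSpace ℝ (Fin d))) : Prop :=
  ∃ c δ : ℝ, 0 < c ∧ c < 1 ∧ 0 < δ ∧ δ < 1 ∧
    ∀ R : Cube d, ∃ M : Cube d, IsLargestEmptyDyadic R E M ∧
      ∃ F : Finset (Cube d),
        (↑F : Set (Cube d)).Pairwise (fun Q Q' => Disjoint Q.set Q'.set) ∧
        (∀ Q ∈ F, IsDyadicSubcube R Q ∧ Q.set ∩ E = ∅ ∧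
          ENNReal.ofReal δ * volume M.set ≤ volume Q.set) ∧
        ENNReal.ofReal c * volume R.set ≤ ∑ Q ∈ F, volume Q.set

/-!
Write `T_n(R)` for the total volume of the cubes of `𝒟_n(R)` meeting `E`, so that the sum over
`𝒟(R,E)` is `∑ₙ T_n(R)`. If `E` is porous with constant `c` and `2⁻ᵐ ≤ c`, each cube `Q` meeting
`E` has an empty dyadic subcube at relative level at most `m`, of volume at least `cᵈ|Q|`; hence
its descendants of relative level `m` that meet `E` fill at most `(1 - cᵈ)|Q|`. This gives
`T_{n+m} ≤ (1 - cᵈ) T_n`, and summing the geometric series bounds the sum by `m c⁻ᵈ |R|`.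
Conversely, if the sum is at most `C|R|`, the first `⌈C⌉ + 1` levels cannot all consist of
cubes meeting `E` (each such level would contribute `|R|`), which yields an empty cube of side
at least `2^{-⌈C⌉-1} ℓ(R)`.
-/

namespace Cube

variable {d : ℕ}

lemma ext' {Q Q' : Cube d} (ha : Q.a = Q'.a) (hl : Q.l = Q'.l) : Q = Q' := by
  cases Q; cases Q'; simp_all

lemma volume_set (Q : Cube d) : volume Q.set = ENNReal.ofReal (Q.l ^ d) := by
  have hpre : Q.set = (MeasurableEquiv.toLp 2 (Fin d → ℝ)).symm ⁻¹'
      Set.univ.pi fun i => Set.Ico (Q.a i) (Q.a i + Q.l) := by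
    ext x
    simp only [Cube.set, Set.mem_preimage, Set.mem_univ_pi, Set.mem_Ico]
    rfl
  rw [hpre, (EuclideanSpace.volume_preserving_symm_measurableEquiv_toLp (Fin d)).measure_preimage
    (MeasurableSet.univ_pi fun i => measurableSet_Ico).nullMeasurableSet, volume_pi_pi]
  simp only [Real.volume_Ico, add_sub_cancel_left, Finset.prod_const, Finset.card_univ,
    Fintype.card_fin, ENNReal.ofReal_pow Q.l_pos.le]

/-- The cube of `𝒟_j(R)` with integer coordinates `k`. -/
noncomputable def dyadic (R : Cube d) (j : ℕ) (k : Fin d → Fin (2 ^ j)) : Cube d where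
  a i := R.a i + k i * (R.l / 2 ^ j)
  l := R.l / 2 ^ j
  l_pos := div_pos R.l_pos (by positivity)

lemma dyadic_l (R : Cube d) (j : ℕ) (k : Fin d → Fin (2 ^ j)) : (R.dyadic j k).l = R.l / 2 ^ j :=
  rfl

lemma isDyadicSubcube_dyadic (R : Cube d) (j : ℕ) (k : Fin d → Fin (2 ^ j)) :
    IsDyadicSubcube R (R.dyadic j k) :=
  ⟨j, fun i => k i, fun i => (k i).is_lt, rfl, fun _ => rfl⟩

lemma isDyadicSubcube_iff {R Q : Cube d} : IsDyadicSubcube R Q ↔ ∃ j k, Q = R.dyadic j k := by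
  constructor
  · rintro ⟨j, k, hk, hl, ha⟩
    exact ⟨j, fun i => ⟨k i, hk i⟩, ext' (funext ha) hl⟩
  · rintro ⟨j, k, rfl⟩
    exact isDyadicSubcube_dyadic R j k

lemma dyadic_injective (R : Cube d) :
    Function.Injective fun p : Σ j, Fin d → Fin (2 ^ j) => R.dyadic p.1 p.2 := by
  rintro ⟨j, k⟩ ⟨j', k'⟩ h
  have hs : R.l / 2 ^ j = R.l / 2 ^ j' := congrArg Cube.l h
  obtain rfl : j = j' := by
    rw [div_eq_div_iff_comm, div_left_inj' R.l_pos.ne'] at hs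
    exact Nat.pow_right_injective le_rfl (by exact_mod_cast hs)
  have hside : R.l / 2 ^ j ≠ 0 := (R.dyadic j k).l_pos.ne'
  congr
  funext i
  have ha : R.a i + k i * (R.l / 2 ^ j) = R.a i + k' i * (R.l / 2 ^ j) :=
    congrFun (congrArg Cube.a h) i
  exact Fin.ext (by exact_mod_cast mul_right_cancel₀ hside (add_left_cancel ha))

lemma dyadic_set_subset (R : Cube d) (j : ℕ) (k : Fin d → Fin (2 ^ j)) :
    (R.dyadic j k).set ⊆ R.set := by
  intro x hx i
  obtain ⟨h₁, h₂⟩ := hx i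
  have hs : 0 < R.l / 2 ^ j := (R.dyadic j k).l_pos
  have hk : ((k i : ℕ) : ℝ) + 1 ≤ 2 ^ j := by exact_mod_cast (k i).is_lt
  have hfit : ((k i : ℝ) + 1) * (R.l / 2 ^ j) ≤ R.l :=
    calc ((k i : ℝ) + 1) * (R.l / 2 ^ j) ≤ 2 ^ j * (R.l / 2 ^ j) :=
          mul_le_mul_of_nonneg_right hk hs.le
      _ = R.l := mul_div_cancel₀ _ (by positivity)
  simp only [dyadic] at h₁ h₂
  constructor <;> nlinarith

/-- Coordinates in `𝒟_{j+n}(R)` of the cubes of `𝒟_n(Q)`, `Q ∈ 𝒟_j(R)`. -/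
def dyadicIndexEquiv (d j n : ℕ) :
    (Fin d → Fin (2 ^ j)) × (Fin d → Fin (2 ^ n)) ≃ (Fin d → Fin (2 ^ (j + n))) :=
  (Equiv.arrowProdEquivProdArrow _ _ _).symm.trans
    (Equiv.arrowCongr (Equiv.refl _) (finProdFinEquiv.trans (finCongr (pow_add 2 j n).symm)))

lemma dyadic_dyadic (R : Cube d) (j n : ℕ) (k : Fin d → Fin (2 ^ j)) (t : Fin d → Fin (2 ^ n)) :
    (R.dyadic j k).dyadic n t = R.dyadic (j + n) (dyadicIndexEquiv d j n (k, t)) := by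
  have hval : ∀ i, ((dyadicIndexEquiv d j n (k, t) i : ℕ) : ℝ) = t i + 2 ^ n * k i := by
    intro i
    simp [dyadicIndexEquiv, finProdFinEquiv_apply_val]
  apply ext'
  · funext i
    simp only [dyadic, hval, pow_add]
    field_simp
    ring
  · simp only [dyadic, pow_add]
    field_simp

end Cube

section LevelVolume

variable {d : ℕ}

def IsPorousWith (E : Set (EuclideanSpace ℝ (Fin d))) (c : ℝ) : Prop :=
  ∀ R : Cube d, ∃ M : Cube d, IsDyadicSubcube R M ∧ M.set ∩ E = ∅ ∧ c * R.l ≤ M.l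

lemma IsPorousWith.le_one {E : Set (EuclideanSpace ℝ (Fin d))} {c : ℝ} (hP : IsPorousWith E c) :
    c ≤ 1 := by
  let R : Cube d := ⟨0, 1, one_pos⟩
  obtain ⟨M, hM, -, hcM⟩ := hP R
  obtain ⟨j, k, rfl⟩ := Cube.isDyadicSubcube_iff.1 hM
  have hside : R.l / 2 ^ j ≤ 1 := div_le_one_of_le₀ (one_le_pow₀ one_le_two) (by positivity)
  simpa [R] using hcM.trans hside

open Classical in
/-- `∑_{Q ∈ 𝒟_n(R), Q ∩ E ≠ ∅} |Q|` -/
noncomputable def levelVolume (E : Set (EuclideanSpace ℝ (Fin d))) (R : Cube d) (n : ℕ) : ℝ :=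
  ∑ k : Fin d → Fin (2 ^ n), if ((R.dyadic n k).set ∩ E).Nonempty then (R.l / 2 ^ n) ^ d else 0

lemma Cube.sum_dyadic_side_pow (R : Cube d) (n : ℕ) :
    ∑ _k : Fin d → Fin (2 ^ n), (R.l / 2 ^ n) ^ d = R.l ^ d := by
  rw [Finset.sum_const, Finset.card_univ, Fintype.card_fun, Fintype.card_fin, Fintype.card_fin,
    nsmul_eq_mul, Nat.cast_pow, Nat.cast_pow, Nat.cast_ofNat, ← mul_pow,
    mul_div_cancel₀ _ (by positivity)]

variable (E : Set (EuclideanSpace ℝ (Fin d)))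

lemma levelVolume_le (R : Cube d) (n : ℕ) : levelVolume E R n ≤ R.l ^ d :=
  calc levelVolume E R n ≤ ∑ _k : Fin d → Fin (2 ^ n), (R.l / 2 ^ n) ^ d :=
        Finset.sum_le_sum fun k _ => by have := R.l_pos; split_ifs; exacts [le_rfl, by positivity]
    _ = R.l ^ d := R.sum_dyadic_side_pow n

lemma exists_dyadic_inter_eq_empty_of_levelVolume_lt {R : Cube d} {n : ℕ}
    (hlt : levelVolume E R n < R.l ^ d) : ∃ k, (R.dyadic n k).set ∩ E = ∅ := by
  by_contra! hmeet
  refine hlt.ne ((Finset.sum_congr rfl fun k _ => ?_).trans (R.sum_dyadic_side_pow n))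
  exact if_pos (hmeet k)

variable {E}

lemma levelVolume_eq_zero {R : Cube d} (hR : R.set ∩ E = ∅) (n : ℕ) : levelVolume E R n = 0 :=
  Finset.sum_eq_zero fun k _ => if_neg <| Set.not_nonempty_iff_eq_empty.2 <|
    Set.subset_eq_empty (Set.inter_subset_inter_left E (R.dyadic_set_subset n k)) hR

variable (E) in
lemma levelVolume_add (R : Cube d) (j n : ℕ) :
    levelVolume E R (j + n) = ∑ k : Fin d → Fin (2 ^ j), levelVolume E (R.dyadic j k) n := by
  unfold levelVolume
  rw [← (Cube.dyadicIndexEquiv d j n).sum_comp, Fintype.sum_prod_type]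
  refine Finset.sum_congr rfl fun k _ => Finset.sum_congr rfl fun t _ => ?_
  rw [← Cube.dyadic_dyadic, Cube.dyadic_l, div_div, ← pow_add]

lemma levelVolume_le_sub_of_dyadic_inter_eq_empty {Q : Cube d} {i m : ℕ} (him : i ≤ m)
    {κ : Fin d → Fin (2 ^ i)} (hκ : (Q.dyadic i κ).set ∩ E = ∅) :
    levelVolume E Q m ≤ Q.l ^ d - (Q.l / 2 ^ i) ^ d := by
  classical
  obtain ⟨n, rfl⟩ := Nat.exists_eq_add_of_le him
  rw [levelVolume_add, ← Finset.add_sum_erase _ _ (Finset.mem_univ κ), levelVolume_eq_zero hκ,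
    zero_add, ← Q.sum_dyadic_side_pow i, ← Finset.add_sum_erase _ _ (Finset.mem_univ κ),
    add_sub_cancel_left]
  exact Finset.sum_le_sum fun k _ => levelVolume_le E _ n

variable {c : ℝ}

lemma IsPorousWith.levelVolume_le_one_sub_mul (hc : 0 < c) (hP : IsPorousWith E c) {m : ℕ}
    (hm : 1 ≤ c * 2 ^ m) (Q : Cube d) : levelVolume E Q m ≤ (1 - c ^ d) * Q.l ^ d := by
  obtain ⟨M, hM, hME, hcM⟩ := hP Q
  obtain ⟨i, κ, rfl⟩ := Cube.isDyadicSubcube_iff.1 hM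
  have hcM : c * Q.l ≤ Q.l / 2 ^ i := hcM
  have him : i ≤ m := by
    have hci : c * 2 ^ i ≤ 1 := by
      rw [le_div_iff₀ (by positivity)] at hcM
      nlinarith [Q.l_pos]
    exact (pow_le_pow_iff_right₀ one_lt_two).1 (le_of_mul_le_mul_left (hci.trans hm) hc)
  calc levelVolume E Q m ≤ Q.l ^ d - (Q.l / 2 ^ i) ^ d :=
        levelVolume_le_sub_of_dyadic_inter_eq_empty him hME
    _ ≤ Q.l ^ d - (c * Q.l) ^ d := by gcongr; exact mul_nonneg hc.le Q.l_pos.le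
    _ = (1 - c ^ d) * Q.l ^ d := by ring

lemma IsPorousWith.levelVolume_add_le (hc : 0 < c) (hP : IsPorousWith E c) {m : ℕ}
    (hm : 1 ≤ c * 2 ^ m) (R : Cube d) (n : ℕ) :
    levelVolume E R (n + m) ≤ (1 - c ^ d) * levelVolume E R n := by
  rw [levelVolume_add, levelVolume, Finset.mul_sum]
  refine Finset.sum_le_sum fun k _ => ?_
  rw [mul_ite, mul_zero]
  split_ifs with hk
  · exact hP.levelVolume_le_one_sub_mul hc hm _
  · rw [levelVolume_eq_zero (Set.not_nonempty_iff_eq_empty.1 hk)]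

lemma IsPorousWith.levelVolume_le_pow (hc : 0 < c) (hP : IsPorousWith E c) {m : ℕ}
    (hm : 1 ≤ c * 2 ^ m) (R : Cube d) (n : ℕ) :
    levelVolume E R n ≤ (1 - c ^ d) ^ (n / m) * R.l ^ d := by
  have hρ : 0 ≤ 1 - c ^ d := sub_nonneg.2 (pow_le_one₀ hc.le hP.le_one)
  suffices ∀ q r, levelVolume E R (q * m + r) ≤ (1 - c ^ d) ^ q * R.l ^ d by
    simpa only [Nat.div_add_mod'] using this (n / m) (n % m)
  intro q r
  induction q with
  | zero => simpa using levelVolume_le E R r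
  | succ q ih =>
    calc levelVolume E R ((q + 1) * m + r) = levelVolume E R (q * m + r + m) := by ring_nf
      _ ≤ (1 - c ^ d) * levelVolume E R (q * m + r) := hP.levelVolume_add_le hc hm R _
      _ ≤ (1 - c ^ d) * ((1 - c ^ d) ^ q * R.l ^ d) := mul_le_mul_of_nonneg_left ih hρ
      _ = (1 - c ^ d) ^ (q + 1) * R.l ^ d := by ring

end LevelVolume

lemma ENNReal.tsum_pow_div (r : ENNReal) {m : ℕ} (hm : m ≠ 0) :
    ∑' n : ℕ, r ^ (n / m) = m * (1 - r)⁻¹ := by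
  have : NeZero m := ⟨hm⟩
  have hdiv : ∀ p : ℕ × Fin m, (p.1 * m + p.2) / m = p.1 := fun p => by
    rw [Nat.add_comm, Nat.add_mul_div_right _ _ (Nat.pos_of_ne_zero hm),
      Nat.div_eq_of_lt p.2.is_lt, zero_add]
  rw [← (Nat.divModEquiv m).symm.tsum_eq]
  simp only [Nat.divModEquiv_symm_apply, hdiv]
  rw [ENNReal.tsum_prod (f := fun q (_ : Fin m) => r ^ q)]
  simp only [tsum_fintype, Finset.sum_const, Finset.card_univ, Fintype.card_fin, nsmul_eq_mul]
  rw [ENNReal.tsum_mul_left, ENNReal.tsum_geometric]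

section Carleson

variable {d : ℕ} {E : Set (EuclideanSpace ℝ (Fin d))}

variable (E) in
lemma tsum_volume_dyadic_inter_nonempty (R : Cube d) :
    ∑' Q : {Q : Cube d // IsDyadicSubcube R Q ∧ (Q.set ∩ E).Nonempty}, volume Q.1.set =
      ∑' n, ENNReal.ofReal (levelVolume E R n) := by
  classical
  let S : Set (Σ j, Fin d → Fin (2 ^ j)) := {p | ((R.dyadic p.1 p.2).set ∩ E).Nonempty}
  let e : S ≃ {Q : Cube d // IsDyadicSubcube R Q ∧ (Q.set ∩ E).Nonempty} :=
    Equiv.ofBijective (fun p => ⟨R.dyadic p.1.1 p.1.2, R.isDyadicSubcube_dyadic _ _, p.2⟩)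
      ⟨fun p q h => Subtype.ext (R.dyadic_injective (congrArg Subtype.val h)), by
        rintro ⟨Q, hQ, hQE⟩
        obtain ⟨j, k, rfl⟩ := Cube.isDyadicSubcube_iff.1 hQ
        exact ⟨⟨⟨j, k⟩, hQE⟩, rfl⟩⟩
  rw [← e.tsum_eq]
  change ∑' p : S, volume (R.dyadic p.1.1 p.1.2).set = _
  rw [tsum_subtype S fun p => volume (R.dyadic p.1 p.2).set, ENNReal.tsum_sigma']
  refine tsum_congr fun n => ?_
  rw [tsum_fintype, levelVolume, ENNReal.ofReal_sum_of_nonneg fun k _ => by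
    have := R.l_pos; split_ifs <;> positivity]
  refine Finset.sum_congr rfl fun k _ => ?_
  rw [Set.indicator_apply, apply_ite ENNReal.ofReal, ENNReal.ofReal_zero, Cube.volume_set,
    Cube.dyadic_l]
  rfl

variable {c : ℝ}

lemma IsPorousWith.exists_tsum_volume_le (hc : 0 < c) (hP : IsPorousWith E c) :
    ∃ C : ℝ, ∀ R : Cube d,
      ∑' Q : {Q : Cube d // IsDyadicSubcube R Q ∧ (Q.set ∩ E).Nonempty}, volume Q.1.set
        ≤ ENNReal.ofReal C * volume R.set := by
  obtain ⟨m, hm⟩ := pow_unbounded_of_one_lt c⁻¹ one_lt_two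
  have hm : 1 ≤ c * 2 ^ (m + 1) := by
    rw [inv_lt_iff_one_lt_mul₀ hc] at hm
    nlinarith [pow_succ (2 : ℝ) m]
  have hcd : 0 < c ^ d := pow_pos hc d
  have hcd1 : c ^ d ≤ 1 := pow_le_one₀ hc.le hP.le_one
  have hρ : 1 - ENNReal.ofReal (1 - c ^ d) = ENNReal.ofReal (c ^ d) := by
    rw [ENNReal.ofReal_sub 1 hcd.le, ENNReal.ofReal_one,
      ENNReal.sub_sub_cancel ENNReal.one_ne_top (ENNReal.ofReal_le_one.2 hcd1)]
  refine ⟨(m + 1 : ℕ) / c ^ d, fun R => ?_⟩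
  calc ∑' Q : {Q : Cube d // IsDyadicSubcube R Q ∧ (Q.set ∩ E).Nonempty}, volume Q.1.set
      = ∑' n, ENNReal.ofReal (levelVolume E R n) := tsum_volume_dyadic_inter_nonempty E R
    _ ≤ ∑' n, ENNReal.ofReal (1 - c ^ d) ^ (n / (m + 1)) * ENNReal.ofReal (R.l ^ d) :=
        ENNReal.tsum_le_tsum fun n => by
          rw [← ENNReal.ofReal_pow (sub_nonneg.2 hcd1),
            ← ENNReal.ofReal_mul (pow_nonneg (sub_nonneg.2 hcd1) _)]
          exact ENNReal.ofReal_le_ofReal (hP.levelVolume_le_pow hc hm R n)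
    _ = ENNReal.ofReal ((m + 1 : ℕ) / c ^ d) * volume R.set := by
        rw [ENNReal.tsum_mul_right, ENNReal.tsum_pow_div _ m.succ_ne_zero, hρ, Cube.volume_set,
          ENNReal.ofReal_div_of_pos hcd, ENNReal.ofReal_natCast, div_eq_mul_inv]

lemma isPorousWith_of_tsum_volume_le {C : ℝ}
    (hC : ∀ R : Cube d,
      ∑' Q : {Q : Cube d // IsDyadicSubcube R Q ∧ (Q.set ∩ E).Nonempty}, volume Q.1.set
        ≤ ENNReal.ofReal C * volume R.set) :
    IsPorousWith E (1 / 2 ^ (⌈C⌉₊ + 1)) := by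
  set N := ⌈C⌉₊ + 1
  intro R
  obtain ⟨n, hn, hlt⟩ : ∃ n < N, levelVolume E R n < R.l ^ d := by
    by_contra! hfull
    have hvol : volume R.set ≠ 0 := by simp [Cube.volume_set, R.l_pos]
    have hNC : (N : ENNReal) * volume R.set ≤ ENNReal.ofReal C * volume R.set :=
      calc (N : ENNReal) * volume R.set = ∑ _n ∈ Finset.range N, ENNReal.ofReal (R.l ^ d) := by
            simp [Cube.volume_set]
        _ ≤ ∑ n ∈ Finset.range N, ENNReal.ofReal (levelVolume E R n) :=
            Finset.sum_le_sum fun n hn => ENNReal.ofReal_le_ofReal (hfull n (Finset.mem_range.1 hn))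
        _ ≤ ∑' n, ENNReal.ofReal (levelVolume E R n) := ENNReal.sum_le_tsum _
        _ = _ := (tsum_volume_dyadic_inter_nonempty E R).symm
        _ ≤ _ := hC R
    rw [ENNReal.mul_le_mul_iff_left hvol (by simp [Cube.volume_set]),
      ENNReal.natCast_le_ofReal (Nat.succ_ne_zero _)] at hNC
    linarith [Nat.le_ceil C, (by push_cast [N]; ring : (N : ℝ) = ⌈C⌉₊ + 1)]
  obtain ⟨k, hk⟩ := exists_dyadic_inter_eq_empty_of_levelVolume_lt E hlt
  refine ⟨R.dyadic n k, R.isDyadicSubcube_dyadic n k, hk, ?_⟩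
  rw [Cube.dyadic_l, one_div_mul_eq_div]
  exact div_le_div_of_nonneg_left R.l_pos.le (by positivity)
    (pow_le_pow_right₀ one_le_two hn.le)

end Carleson

/-- Borichev–Nicolau–Thomas in ℝ^d: E is porous iff
∑_{Q ∈ 𝒟(R,E)} |Q| ≤ C|R| for all cubes R. -/
theorem stmt19 {d : ℕ} (E : Set (EuclideanSpace ℝ (Fin d))) :
    (∃ c : ℝ, 0 < c ∧ c < 1 ∧ ∀ R : Cube d, ∃ M : Cube d,
        IsDyadicSubcube R M ∧ M.set ∩ E = ∅ ∧ c * R.l ≤ M.l) ↔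
      ∃ C : ℝ, ∀ R : Cube d,
        ∑' Q : {Q : Cube d // IsDyadicSubcube R Q ∧ (Q.set ∩ E).Nonempty}, volume Q.1.set
          ≤ ENNReal.ofReal C * volume R.set := by
  constructor
  · rintro ⟨c, hc, -, hP⟩
    exact IsPorousWith.exists_tsum_volume_le hc hP
  · rintro ⟨C, hC⟩
    exact ⟨_, by positivity, (div_lt_one (by positivity)).2 (one_lt_pow₀ one_lt_two (by omega)),
      isPorousWith_of_tsum_volume_le hC⟩
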